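/- Let s, r ≥ 0 and d ≥ 1 be integers with s + r + d ≥ 2, and let X ∈ E(s,r,d) have data (λ, Q, P, E). An affine map T(w) = a·w + b leaves X invariant if and only if a^{s−r−1} = 1 and the polynomial identities Q(a·w+b) = a^s·Q(w), P(a·w+b) = a^r·P(w) and E(a·w+b) = E(w) hold in ℂ[w]. Moreover, when these conditions hold one also has a^d = 1. -/

import Mathlib

/-!
Write `T w = a w + b`. Invariance says `(Q∘T)·P·exp(E∘T − E) = a·Q·(P∘T)`. If `g·exp F = h` for
nonzero polynomials `g, h`, differentiating gives `g·F'·h = W(g, h)`, and the Wronskian has degree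
`< deg g + deg h`; so `F' = 0` and `E∘T = E + c`. Then `Q ∣ (Q∘T)·P` and `P ∣ Q·(P∘T)`, so
coprimality, monicity and equal degrees give `Q∘T = a^s Q`, `P∘T = a^r P` and `a^s e^c = a^(r+1)`.
Finally `c = 0`: for `a ≠ 1` evaluate at the fixed point of `T`; for a translation `b ≠ 0`, only
constants are `T`-invariant, so `s = r = 0` and `deg E ≤ 1`, excluded by `s + r + d ≥ 2`.
Comparing leading coefficients in `E∘T = E` gives `a^d = 1`.
-/

open Polynomial

noncomputable section

/-- The data `(λ, Q, P, E)` of an element `X ∈ E(s,r,d)`: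
`λ ≠ 0`, `Q`, `P` monic of degrees `s`, `r` with no common roots,
and `deg E = d`. -/
def EData (s r d : ℕ) (lam : ℂ) (Q P E : Polynomial ℂ) : Prop :=
  lam ≠ 0 ∧ Q.Monic ∧ P.Monic ∧ Q.natDegree = s ∧ P.natDegree = r ∧
    E.natDegree = d ∧ ∀ z : ℂ, ¬ (Q.IsRoot z ∧ P.IsRoot z)

/-- The affine map `T(w) = a·w + b` leaves the vector field with data `(λ,Q,P,E)`
invariant: `Q(aw+b)·P(w)·exp(E(aw+b)) = a·Q(w)·P(aw+b)·exp(E(w))` for all `w`. -/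
def LeavesInv (Q P E : Polynomial ℂ) (a b : ℂ) : Prop :=
  ∀ w : ℂ,
    Q.eval (a * w + b) * P.eval w * Complex.exp (E.eval (a * w + b)) =
      a * Q.eval w * P.eval (a * w + b) * Complex.exp (E.eval w)

namespace Polynomial

section Domain

variable {R : Type*} [CommRing R] [NoZeroDivisors R]

theorem derivative_eq_zero_of_mul_mul_eq_wronskian {g h F : R[X]} (hg : g ≠ 0) (hh : h ≠ 0)
    (H : g * derivative F * h = wronskian g h) : derivative F = 0 := by
  by_contra hF
  have hgFh : g * derivative F * h ≠ 0 := mul_ne_zero (mul_ne_zero hg hF) hh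
  have hlt := natDegree_wronskian_lt_add (H ▸ hgFh)
  rw [← H, natDegree_mul (mul_ne_zero hg hF) hh, natDegree_mul hg hF] at hlt
  omega

theorem leadingCoeff_comp_C_mul_X_add_C (p : R[X]) {a : R} (b : R) (ha : a ≠ 0) :
    (p.comp (C a * X + C b)).leadingCoeff = p.leadingCoeff * a ^ p.natDegree := by
  rw [leadingCoeff_comp (by rw [natDegree_linear ha]; exact one_ne_zero), leadingCoeff_linear ha]

theorem comp_C_mul_X_add_C_ne_zero {p : R[X]} (hp : p ≠ 0) {a : R} (b : R) (ha : a ≠ 0) :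
    p.comp (C a * X + C b) ≠ 0 := by
  rw [← leadingCoeff_ne_zero, leadingCoeff_comp_C_mul_X_add_C p b ha]
  exact mul_ne_zero (leadingCoeff_ne_zero.mpr hp) (pow_ne_zero _ ha)

theorem Monic.comp_C_mul_X_add_C_eq_of_dvd {p : R[X]} (hp : p.Monic) {a b : R} (ha : a ≠ 0)
    (hdvd : p ∣ p.comp (C a * X + C b)) :
    p.comp (C a * X + C b) = C (a ^ p.natDegree) * p := by
  have hdeg : (p.comp (C a * X + C b)).natDegree = p.natDegree := by
    rw [natDegree_comp, natDegree_linear ha, mul_one]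
  rw [eq_leadingCoeff_mul_of_monic_of_dvd_of_natDegree_le hp hdvd hdeg.le,
    leadingCoeff_comp_C_mul_X_add_C p b ha, hp.leadingCoeff, one_mul]

theorem pow_natDegree_eq_one_of_comp_C_mul_X_add_C_eq_self {p : R[X]} {a b : R} (ha : a ≠ 0)
    (h : p.comp (C a * X + C b) = p) : a ^ p.natDegree = 1 := by
  rcases eq_or_ne p 0 with rfl | hp
  · simp
  have hlc := congrArg leadingCoeff h
  rw [leadingCoeff_comp_C_mul_X_add_C p b ha] at hlc
  exact mul_left_cancel₀ (leadingCoeff_ne_zero.mpr hp) (hlc.trans (mul_one _).symm)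

end Domain

section Field

variable {K : Type*} [Field K]

theorem eq_zero_of_comp_C_mul_X_add_C_eq_add_C_of_ne_one {p : K[X]} {a b c : K} (ha : a ≠ 1)
    (h : p.comp (C a * X + C b) = p + C c) : c = 0 := by
  have hfix : a * (b / (1 - a)) + b = b / (1 - a) := by
    field_simp [sub_ne_zero.mpr ha.symm]
    ring
  simpa [eval_comp, hfix] using congrArg (eval (b / (1 - a))) h

variable [CharZero K]

theorem natDegree_eq_zero_of_comp_X_add_C_eq_self {p : K[X]} {b : K} (hb : b ≠ 0)
    (h : p.comp (X + C b) = p) : p.natDegree = 0 := by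
  have hper : ∀ n : ℕ, p.eval (n * b) = p.eval 0 := by
    intro n
    induction n with
    | zero => simp
    | succ n ih =>
      have hstep := congrArg (eval ((n : K) * b)) h
      simp only [eval_comp, eval_add, eval_X, eval_C] at hstep
      push_cast
      rw [add_one_mul, hstep, ih]
  have hinj : Function.Injective fun n : ℕ => (n : K) * b := fun m n hmn => by
    simpa [hb] using hmn
  have hconst : p = C (p.eval 0) :=
    eq_of_infinite_eval_eq _ _ (Set.infinite_of_injective_forall_mem hinj (by simpa using hper))
  rw [hconst, natDegree_C]

theorem natDegree_le_one_of_comp_X_add_C_eq_add_C {p : K[X]} {b c : K} (hb : b ≠ 0)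
    (h : p.comp (X + C b) = p + C c) : p.natDegree ≤ 1 := by
  have h' : (derivative p).comp (X + C b) = derivative p := by
    simpa [derivative_comp] using congrArg derivative h
  have hderiv := natDegree_eq_zero_of_comp_X_add_C_eq_self hb h'
  rw [natDegree_derivative] at hderiv
  omega

theorem eq_zero_of_comp_C_mul_X_add_C_eq_add_C_of_two_le {Q P E : K[X]} {a b c : K}
    (hdeg : 2 ≤ Q.natDegree + P.natDegree + E.natDegree)
    (hQ : Q.comp (C a * X + C b) = C (a ^ Q.natDegree) * Q)
    (hP : P.comp (C a * X + C b) = C (a ^ P.natDegree) * P)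
    (hE : E.comp (C a * X + C b) = E + C c) : c = 0 := by
  rcases ne_or_eq a 1 with ha | rfl
  · exact eq_zero_of_comp_C_mul_X_add_C_eq_add_C_of_ne_one ha hE
  rcases eq_or_ne b 0 with rfl | hb
  · simpa using hE
  -- the degree bound is essential here: `Q = P = 1`, `E = X` are shifted by `c = b ≠ 0`
  simp only [C_1, one_mul, one_pow] at hQ hP hE
  have hQ0 := natDegree_eq_zero_of_comp_X_add_C_eq_self hb hQ
  have hP0 := natDegree_eq_zero_of_comp_X_add_C_eq_self hb hP
  have hE1 := natDegree_le_one_of_comp_X_add_C_eq_add_C hb hE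
  omega

end Field

theorem derivative_eq_zero_of_eval_mul_exp_eq {g h F : ℂ[X]} (hg : g ≠ 0) (hh : h ≠ 0)
    (H : ∀ w, g.eval w * Complex.exp (F.eval w) = h.eval w) : derivative F = 0 := by
  refine derivative_eq_zero_of_mul_mul_eq_wronskian hg hh (Polynomial.funext fun w => ?_)
  have hd : HasDerivAt (fun x => g.eval x * Complex.exp (F.eval x)) ((derivative h).eval w) w := by
    simpa only [H] using h.hasDerivAt w
  have hd' := (g.hasDerivAt w).mul (F.hasDerivAt w).cexp
  simp only [wronskian, eval_mul, eval_sub, ← H w]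
  linear_combination g.eval w * hd'.unique hd

end Polynomial

theorem zpow_sub_sub_one_eq_one_iff {K : Type*} [DivisionRing K] {a : K} (ha : a ≠ 0) (s r : ℕ) :
    a ^ ((s : ℤ) - r - 1) = 1 ↔ a ^ s = a ^ (r + 1) := by
  rw [sub_sub, zpow_sub₀ ha, div_eq_one_iff_eq (zpow_ne_zero _ ha)]
  norm_cast

theorem LeavesInv.exists_comp_eq {Q P E : ℂ[X]} {a b : ℂ} (h : LeavesInv Q P E a b)
    (hQ : Q.Monic) (hP : P.Monic) (hQP : IsCoprime Q P) (ha : a ≠ 0) :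
    ∃ c, Q.comp (C a * X + C b) = C (a ^ Q.natDegree) * Q ∧
      P.comp (C a * X + C b) = C (a ^ P.natDegree) * P ∧
      E.comp (C a * X + C b) = E + C c ∧
      a ^ Q.natDegree * Complex.exp c = a ^ (P.natDegree + 1) := by
  set L : ℂ[X] := C a * X + C b with hL
  have hexp : ∀ w, (Q.comp L * P).eval w * Complex.exp ((E.comp L - E).eval w) =
      (C a * Q * P.comp L).eval w := by
    intro w
    simp only [hL, eval_mul, eval_sub, eval_comp, eval_add, eval_C, eval_X, Complex.exp_sub]
    rw [mul_div_assoc', div_eq_iff (Complex.exp_ne_zero _), h w]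
  -- `exp` of a nonconstant polynomial is not a rational function
  obtain ⟨c, hc⟩ : ∃ c, E.comp L - E = C c :=
    ⟨_, eq_C_of_derivative_eq_zero <| derivative_eq_zero_of_eval_mul_exp_eq
      (mul_ne_zero (comp_C_mul_X_add_C_ne_zero hQ.ne_zero b ha) hP.ne_zero)
      (mul_ne_zero (mul_ne_zero (C_ne_zero.mpr ha) hQ.ne_zero)
        (comp_C_mul_X_add_C_ne_zero hP.ne_zero b ha)) hexp⟩
  have hpoly : Q.comp L * C (Complex.exp c) * P = Q * (C a * P.comp L) :=
    Polynomial.funext fun w => by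
      have hw := hexp w
      simp only [hc, eval_mul, eval_C] at hw ⊢
      linear_combination hw
  have hQL : Q.comp L = C (a ^ Q.natDegree) * Q := by
    refine hQ.comp_C_mul_X_add_C_eq_of_dvd ha ?_
    have hdvd : Q ∣ Q.comp L * C (Complex.exp c) * P := hpoly ▸ dvd_mul_right _ _
    exact (isUnit_C.mpr (Complex.exp_ne_zero c).isUnit).dvd_mul_right.mp
      (hQP.dvd_of_dvd_mul_right hdvd)
  have hPL : P.comp L = C (a ^ P.natDegree) * P := by
    refine hP.comp_C_mul_X_add_C_eq_of_dvd ha ?_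
    have hdvd : P ∣ Q * (C a * P.comp L) := hpoly ▸ dvd_mul_left _ _
    exact (isUnit_C.mpr ha.isUnit).dvd_mul_left.mp (hQP.symm.dvd_of_dvd_mul_left hdvd)
  refine ⟨c, hQL, hPL, by linear_combination hc, C_injective <|
    mul_right_cancel₀ (mul_ne_zero hQ.ne_zero hP.ne_zero) ?_⟩
  rw [hQL, hPL] at hpoly
  simp only [map_mul, map_pow] at hpoly ⊢
  linear_combination hpoly

theorem leavesInv_of_comp_eq {Q P E : ℂ[X]} {a b : ℂ} {s r : ℕ} (hpow : a ^ s = a ^ (r + 1))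
    (hQ : Q.comp (C a * X + C b) = C (a ^ s) * Q) (hP : P.comp (C a * X + C b) = C (a ^ r) * P)
    (hE : E.comp (C a * X + C b) = E) : LeavesInv Q P E a b := by
  intro w
  have hev (p : ℂ[X]) : p.eval (a * w + b) = (p.comp (C a * X + C b)).eval w := by
    simp [eval_comp]
  rw [hev Q, hev P, hev E, hQ, hP, hE]
  simp only [eval_mul, eval_C]
  rw [hpow]
  ring

theorem stmt1_general (s r d : ℕ) (h2 : 2 ≤ s + r + d)
    (lam : ℂ) (Q P E : Polynomial ℂ) (hX : EData s r d lam Q P E)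
    (a b : ℂ) (ha : a ≠ 0) :
    (LeavesInv Q P E a b ↔
      (a ^ ((s : ℤ) - r - 1) = 1 ∧
        Q.comp (C a * X + C b) = C (a ^ s) * Q ∧
        P.comp (C a * X + C b) = C (a ^ r) * P ∧
        E.comp (C a * X + C b) = E))
    ∧
    ((a ^ ((s : ℤ) - r - 1) = 1 ∧
        Q.comp (C a * X + C b) = C (a ^ s) * Q ∧
        P.comp (C a * X + C b) = C (a ^ r) * P ∧
        E.comp (C a * X + C b) = E) → a ^ d = 1) := by
  obtain ⟨-, hQm, hPm, rfl, rfl, rfl, hroot⟩ := hX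
  have hQP : IsCoprime Q P := (isCoprime_iff_aeval_ne_zero_of_isAlgClosed ℂ ℂ Q P).mpr
    fun z => by simpa using not_and_or.mp (hroot z)
  refine ⟨⟨fun h => ?_, fun ⟨hpow, hQ, hP, hE⟩ =>
      leavesInv_of_comp_eq ((zpow_sub_sub_one_eq_one_iff ha _ _).mp hpow) hQ hP hE⟩,
    fun ⟨_, _, _, hE⟩ => pow_natDegree_eq_one_of_comp_C_mul_X_add_C_eq_self ha hE⟩
  obtain ⟨c, hQ, hP, hE, hpow⟩ := h.exists_comp_eq hQm hPm hQP ha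
  obtain rfl : c = 0 := eq_zero_of_comp_C_mul_X_add_C_eq_add_C_of_two_le h2 hQ hP hE
  rw [Complex.exp_zero, mul_one] at hpow
  exact ⟨(zpow_sub_sub_one_eq_one_iff ha _ _).mpr hpow, hQ, hP, by simpa using hE⟩

/-- `T(w) = a·w + b` leaves `X` invariant iff `a^(s−r−1) = 1` and
`Q(aw+b) = a^s·Q(w)`, `P(aw+b) = a^r·P(w)`, `E(aw+b) = E(w)` as polynomials;
moreover these conditions imply `a^d = 1`. -/
theorem stmt1 (s r d : ℕ) (hd : 1 ≤ d) (h2 : 2 ≤ s + r + d)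
    (lam : ℂ) (Q P E : Polynomial ℂ) (hX : EData s r d lam Q P E)
    (a b : ℂ) (ha : a ≠ 0) :
    (LeavesInv Q P E a b ↔
      (a ^ ((s : ℤ) - r - 1) = 1 ∧
        Q.comp (C a * X + C b) = C (a ^ s) * Q ∧
        P.comp (C a * X + C b) = C (a ^ r) * P ∧
        E.comp (C a * X + C b) = E))
    ∧
    ((a ^ ((s : ℤ) - r - 1) = 1 ∧
        Q.comp (C a * X + C b) = C (a ^ s) * Q ∧
        P.comp (C a * X + C b) = C (a ^ r) * P ∧
        E.comp (C a * X + C b) = E) → a ^ d = 1) :=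
  stmt1_general s r d h2 lam Q P E hX a b ha
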